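/- An HC tree T of order n is locally optimal with respect to the interchange operation if and only if for every edge (x,y) of T in which x is an internal node with parent y, letting A and B be the leaf sets of the two subtrees rooted at the children of x and C the leaf set of the subtree rooted at the other child of y, both |C|·w(A,B) ≥ |A|·w(B,C) and |C|·w(A,B) ≥ |B|·w(A,C) hold. -/
import Mathlib


/-- A (rooted, full) binary tree with leaves labeled by elements of `α`. -/
inductive HCTree (α : Type) : Type
  | leaf : α → HCTree α
  | node : HCTree α → HCTree α → HCTree α
  deriving DecidableEq

namespace HCTree

variable {α : Type} [DecidableEq α]

/-- The set of leaf labels of a tree. -/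
def leaves : HCTree α → Finset α
  | leaf a => {a}
  | node l r => leaves l ∪ leaves r

/-- The tree is a valid HC tree: all leaf labels are pairwise distinct. -/
def Proper : HCTree α → Prop
  | leaf _ => True
  | node l r => Proper l ∧ Proper r ∧ Disjoint (leaves l) (leaves r)

/-- The number of leaves of the subtree rooted at the lowest common ancestor
of the leaves `i` and `j` (i.e. `|T_{i,j}|`). -/
def lcaSize : HCTree α → α → α → ℕ
  | leaf _, _, _ => 1
  | node l r, i, j =>
      if i ∈ leaves l ∧ j ∈ leaves l then lcaSize l i j
      else if i ∈ leaves r ∧ j ∈ leaves r then lcaSize r i j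
      else (leaves l ∪ leaves r).card

/-- `Σ_{i<j, i,j ∈ L} w i j`. -/
noncomputable def pairsSum [LinearOrder α] (w : α → α → ℝ) (L : Finset α) : ℝ :=
  ∑ i ∈ L, ∑ j ∈ L, if i < j then w i j else 0

/-- Moseley–Wang revenue of `T` with respect to its own leaf set:
`rev(T) = Σ_{i<j} w(i,j) (|L| - |T_{i,j}|)`. -/
noncomputable def rev [LinearOrder α] (w : α → α → ℝ) (T : HCTree α) : ℝ :=
  ∑ i ∈ T.leaves, ∑ j ∈ T.leaves,
    if i < j then w i j * ((T.leaves.card : ℝ) - (T.lcaSize i j : ℝ)) else 0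

/-- Dasgupta cost: `cost(T) = Σ_{i<j} w(i,j) |T_{i,j}|`. -/
noncomputable def cost [LinearOrder α] (w : α → α → ℝ) (T : HCTree α) : ℝ :=
  ∑ i ∈ T.leaves, ∑ j ∈ T.leaves,
    if i < j then w i j * (T.lcaSize i j : ℝ) else 0

/-- `w(A,B) = Σ_{i∈A, j∈B} w(i,j)`. -/
noncomputable def wSet (w : α → α → ℝ) (A B : Finset α) : ℝ := ∑ i ∈ A, ∑ j ∈ B, w i j

/-- One-hole contexts for `HCTree`. -/
inductive Ctx (α : Type) : Type
  | hole : Ctx α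
  | nodeL : Ctx α → HCTree α → Ctx α
  | nodeR : HCTree α → Ctx α → Ctx α

/-- Filling the hole of a context with a tree. -/
def Ctx.fill {α : Type} : Ctx α → HCTree α → HCTree α
  | Ctx.hole, T => T
  | Ctx.nodeL K r, T => node (Ctx.fill K T) r
  | Ctx.nodeR l K, T => node l (Ctx.fill K T)

/-- Equality of HC trees as *unordered* trees (children of a node are unordered). -/
inductive TEq : HCTree α → HCTree α → Prop
  | leaf (a : α) : TEq (leaf a) (leaf a)
  | node {l r l' r' : HCTree α} : TEq l l' → TEq r r' → TEq (node l r) (node l' r')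
  | swap {l r l' r' : HCTree α} : TEq l r' → TEq r l' → TEq (node l r) (node l' r')

/-- `T'` is obtained from `T` by a single interchange operation: at an edge `(x,y)`
where `x` is internal with parent `y`, the subtrees rooted at the children of `x`
have leaf sets `A` and `B`, and the other child of `y` has leaf set `C`; the
operation swaps the `B`-subtree with the `C`-subtree, or the `A`-subtree with
the `C`-subtree. -/
def Interchange {α : Type} (T T' : HCTree α) : Prop :=
  ∃ (K : Ctx α) (A B C : HCTree α),
    T = K.fill (node (node A B) C) ∧
    (T' = K.fill (node (node A C) B) ∨ T' = K.fill (node (node C B) A))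

/-- `T` is locally optimal: no interchange, performed on any presentation `S` of
`T` as an unordered tree, strictly increases the revenue. -/
def LocalOpt [LinearOrder α] (w : α → α → ℝ) (T : HCTree α) : Prop :=
  ∀ S S' : HCTree α, TEq T S → Interchange S S' → rev w S' ≤ rev w T

/-- One step of local search: an interchange, up to unordered-tree equality. -/
def IStep (T T' : HCTree α) : Prop :=
  ∃ S S' : HCTree α, TEq T S ∧ Interchange S S' ∧ TEq S' T'

/-- The interchange distance: minimum number of interchange operations needed to
convert `T₁` into `T₂` (as unordered trees). -/
noncomputable def idist (T₁ T₂ : HCTree α) : ℕ :=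
  sInf {k : ℕ | ∃ f : ℕ → HCTree α, f 0 = T₁ ∧ TEq (f k) T₂ ∧
    ∀ i < k, IStep (f i) (f (i + 1))}

/-- The total cost of all merges of `T`: the sum over internal nodes, with
children leaf sets `A`, `B`, of `(|A|+|B|)·w(A,B)`. -/
noncomputable def mergeCostSum (w : α → α → ℝ) : HCTree α → ℝ
  | leaf _ => 0
  | node l r => mergeCostSum w l + mergeCostSum w r
      + ((l.leaves.card : ℝ) + (r.leaves.card : ℝ)) * wSet w l.leaves r.leaves

/-- The total revenue of all merges of `T` in a tree of order `n`: the sum over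
internal nodes, with children leaf sets `A`, `B`, of `(n-|A|-|B|)·w(A,B)`. -/
noncomputable def mergeRevSum (w : α → α → ℝ) (n : ℕ) : HCTree α → ℝ
  | leaf _ => 0
  | node l r => mergeRevSum w n l + mergeRevSum w n r
      + ((n : ℝ) - (l.leaves.card : ℝ) - (r.leaves.card : ℝ)) * wSet w l.leaves r.leaves

/-- Average similarity between two clusters. -/
noncomputable def sim (w : α → α → ℝ) (A B : Finset α) : ℝ :=
  wSet w A B / ((A.card : ℝ) * (B.card : ℝ))

/-- The forests (partial hierarchies) reachable by the average link algorithm: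
start from singletons, and repeatedly merge two clusters of maximal average
similarity. -/
inductive AvgLinkForest [Fintype α] (w : α → α → ℝ) : Finset (HCTree α) → Prop
  | init : AvgLinkForest w (Finset.univ.image (leaf : α → HCTree α))
  | merge {F : Finset (HCTree α)} {A B : HCTree α} :
      AvgLinkForest w F → A ∈ F → B ∈ F → A ≠ B →
      (∀ X ∈ F, ∀ Y ∈ F, X ≠ Y → sim w X.leaves Y.leaves ≤ sim w A.leaves B.leaves) →
      AvgLinkForest w (insert (node A B) ((F.erase A).erase B))

/-- `T` is produced by some execution of the average link algorithm. -/
def AvgLinkTree [Fintype α] (w : α → α → ℝ) (T : HCTree α) : Prop :=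
  AvgLinkForest w {T}

section Aux

lemma wSet_comm (w : α → α → ℝ) (hsym : ∀ i j, w i j = w j i) (A B : Finset α) :
    wSet w A B = wSet w B A := by
  rw [wSet, wSet, Finset.sum_comm]
  exact Finset.sum_congr rfl fun i _ => Finset.sum_congr rfl fun j _ => hsym j i

lemma wSet_union_left (w : α → α → ℝ) {A B : Finset α} (C : Finset α) (h : Disjoint A B) :
    wSet w (A ∪ B) C = wSet w A C + wSet w B C := Finset.sum_union h

lemma leaves_fill_congr (K : Ctx α) {U V : HCTree α} (h : U.leaves = V.leaves) :
    (K.fill U).leaves = (K.fill V).leaves := by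
  induction K with
  | hole => exact h
  | nodeL K r ih => simp [Ctx.fill, leaves, ih]
  | nodeR l K ih => simp [Ctx.fill, leaves, ih]

lemma proper_fill (K : Ctx α) {U : HCTree α} (h : (K.fill U).Proper) : U.Proper := by
  induction K with
  | hole => exact h
  | nodeL K r ih => exact ih h.1
  | nodeR l K ih => exact ih h.2.1

lemma proper_fill_congr (K : Ctx α) {U V : HCTree α} (hl : U.leaves = V.leaves)
    (hV : V.Proper) (h : (K.fill U).Proper) : (K.fill V).Proper := by
  induction K with
  | hole => exact hV
  | nodeL K r ih => exact ⟨ih h.1, h.2.1, (leaves_fill_congr K hl) ▸ h.2.2⟩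
  | nodeR l K ih => exact ⟨h.1, ih h.2.1, (leaves_fill_congr K hl) ▸ h.2.2⟩

/-- revenue with an arbitrary "order" parameter. -/
noncomputable def revAux [LinearOrder α] (w : α → α → ℝ) (n : ℝ) (T : HCTree α) : ℝ :=
  ∑ i ∈ T.leaves, ∑ j ∈ T.leaves,
    if i < j then w i j * (n - (T.lcaSize i j : ℝ)) else 0

lemma pair_sum_eq [LinearOrder α] (w : α → α → ℝ) (hsym : ∀ i j, w i j = w j i)
    {A B : Finset α} (hd : Disjoint A B) (c : ℝ) :
    ((∑ i ∈ A, ∑ j ∈ B, if i < j then w i j * c else 0)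
      + ∑ i ∈ B, ∑ j ∈ A, if i < j then w i j * c else 0) = wSet w A B * c := by
  rw [Finset.sum_comm (s := B) (t := A)]
  rw [← Finset.sum_add_distrib, wSet, Finset.sum_mul]
  refine Finset.sum_congr rfl fun i hi => ?_
  rw [← Finset.sum_add_distrib, Finset.sum_mul]
  refine Finset.sum_congr rfl fun j hj => ?_
  have hij : i ≠ j := fun h => (Finset.disjoint_left.mp hd hi) (h ▸ hj)
  rcases lt_or_gt_of_ne hij with h | h
  · simp [h, not_lt_of_gt h]
  · simp [h, not_lt_of_gt h, hsym i j]

lemma revAux_node [LinearOrder α] (w : α → α → ℝ) (hsym : ∀ i j, w i j = w j i)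
    (n : ℝ) (l r : HCTree α) (hd : Disjoint l.leaves r.leaves) :
    revAux w n (node l r) = revAux w n l + revAux w n r
      + (n - ((l.leaves ∪ r.leaves).card : ℝ)) * wSet w l.leaves r.leaves := by
  have expand : revAux w n (node l r)
      = ((∑ i ∈ l.leaves, ∑ j ∈ l.leaves,
            if i < j then w i j * (n - ((node l r).lcaSize i j : ℝ)) else 0)
        + ∑ i ∈ l.leaves, ∑ j ∈ r.leaves,
            if i < j then w i j * (n - ((node l r).lcaSize i j : ℝ)) else 0)
      + ((∑ i ∈ r.leaves, ∑ j ∈ l.leaves,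
            if i < j then w i j * (n - ((node l r).lcaSize i j : ℝ)) else 0)
        + ∑ i ∈ r.leaves, ∑ j ∈ r.leaves,
            if i < j then w i j * (n - ((node l r).lcaSize i j : ℝ)) else 0) := by
    rw [revAux, show (node l r).leaves = l.leaves ∪ r.leaves from rfl,
      Finset.sum_union hd]
    congr 1
    · rw [← Finset.sum_add_distrib]
      exact Finset.sum_congr rfl fun i _ => Finset.sum_union hd
    · rw [← Finset.sum_add_distrib]
      exact Finset.sum_congr rfl fun i _ => Finset.sum_union hd
  have hLL : (∑ i ∈ l.leaves, ∑ j ∈ l.leaves,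
      if i < j then w i j * (n - ((node l r).lcaSize i j : ℝ)) else 0) = revAux w n l := by
    refine Finset.sum_congr rfl fun i hi => Finset.sum_congr rfl fun j hj => ?_
    have h1 : (node l r).lcaSize i j = l.lcaSize i j := by
      simp only [lcaSize]; rw [if_pos ⟨hi, hj⟩]
    rw [h1]
  have hRR : (∑ i ∈ r.leaves, ∑ j ∈ r.leaves,
      if i < j then w i j * (n - ((node l r).lcaSize i j : ℝ)) else 0) = revAux w n r := by
    refine Finset.sum_congr rfl fun i hi => Finset.sum_congr rfl fun j hj => ?_
    have h1 : (node l r).lcaSize i j = r.lcaSize i j := by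
      simp only [lcaSize]
      rw [if_neg (fun h => (Finset.disjoint_right.mp hd hi) h.1), if_pos ⟨hi, hj⟩]
    rw [h1]
  have hLR : (∑ i ∈ l.leaves, ∑ j ∈ r.leaves,
      if i < j then w i j * (n - ((node l r).lcaSize i j : ℝ)) else 0)
      = ∑ i ∈ l.leaves, ∑ j ∈ r.leaves,
          if i < j then w i j * (n - ((l.leaves ∪ r.leaves).card : ℝ)) else 0 := by
    refine Finset.sum_congr rfl fun i hi => Finset.sum_congr rfl fun j hj => ?_
    have h1 : (node l r).lcaSize i j = (l.leaves ∪ r.leaves).card := by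
      simp only [lcaSize]
      rw [if_neg (fun h => (Finset.disjoint_left.mp hd h.2) hj),
        if_neg (fun h => (Finset.disjoint_left.mp hd hi) h.1)]
    rw [h1]
  have hRL : (∑ i ∈ r.leaves, ∑ j ∈ l.leaves,
      if i < j then w i j * (n - ((node l r).lcaSize i j : ℝ)) else 0)
      = ∑ i ∈ r.leaves, ∑ j ∈ l.leaves,
          if i < j then w i j * (n - ((l.leaves ∪ r.leaves).card : ℝ)) else 0 := by
    refine Finset.sum_congr rfl fun i hi => Finset.sum_congr rfl fun j hj => ?_
    have h1 : (node l r).lcaSize i j = (l.leaves ∪ r.leaves).card := by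
      simp only [lcaSize]
      rw [if_neg (fun h => (Finset.disjoint_left.mp hd h.1) hi),
        if_neg (fun h => (Finset.disjoint_left.mp hd hj) h.2)]
    rw [h1]
  rw [expand, hLL, hRR, hLR, hRL]
  have := pair_sum_eq w hsym hd (n - ((l.leaves ∪ r.leaves).card : ℝ))
  linarith [this]

lemma revAux_eq_mergeRevSum [LinearOrder α] (w : α → α → ℝ)
    (hsym : ∀ i j, w i j = w j i) (n : ℕ) :
    ∀ T : HCTree α, T.Proper → revAux w (n : ℝ) T = mergeRevSum w n T := by
  intro T hT
  induction T with
  | leaf a => simp [revAux, mergeRevSum, leaves]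
  | node l r ihl ihr =>
    obtain ⟨hl, hr, hd⟩ := hT
    rw [revAux_node w hsym _ _ _ hd, ihl hl, ihr hr]
    simp only [mergeRevSum]
    rw [Finset.card_union_of_disjoint hd]
    push_cast
    ring

lemma rev_eq_mergeRevSum [LinearOrder α] (w : α → α → ℝ)
    (hsym : ∀ i j, w i j = w j i) (T : HCTree α) (hT : T.Proper) :
    rev w T = mergeRevSum w T.leaves.card T :=
  revAux_eq_mergeRevSum w hsym T.leaves.card T hT

lemma teq_leaves {T S : HCTree α} (h : TEq T S) : T.leaves = S.leaves := by
  induction h with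
  | leaf a => rfl
  | node h1 h2 ih1 ih2 => simp [leaves, ih1, ih2]
  | swap h1 h2 ih1 ih2 => simp [leaves, ih1, ih2, Finset.union_comm]

lemma teq_proper {T S : HCTree α} (h : TEq T S) (hT : T.Proper) : S.Proper := by
  induction h with
  | leaf a => trivial
  | node h1 h2 ih1 ih2 =>
    exact ⟨ih1 hT.1, ih2 hT.2.1, (teq_leaves h1) ▸ (teq_leaves h2) ▸ hT.2.2⟩
  | swap h1 h2 ih1 ih2 =>
    refine ⟨ih2 hT.2.1, ih1 hT.1, ?_⟩
    rw [← teq_leaves h2, ← teq_leaves h1]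
    exact hT.2.2.symm

lemma teq_mergeRevSum (w : α → α → ℝ) (hsym : ∀ i j, w i j = w j i) (n : ℕ)
    {T S : HCTree α} (h : TEq T S) : mergeRevSum w n T = mergeRevSum w n S := by
  induction h with
  | leaf a => rfl
  | node h1 h2 ih1 ih2 =>
    simp only [mergeRevSum]
    rw [ih1, ih2, teq_leaves h1, teq_leaves h2]
  | swap h1 h2 ih1 ih2 =>
    simp only [mergeRevSum]
    rw [ih1, ih2, teq_leaves h1, teq_leaves h2, wSet_comm w hsym]
    ring

lemma mergeRevSum_fill (w : α → α → ℝ) (n : ℕ) (K : Ctx α) {U V : HCTree α}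
    (h : U.leaves = V.leaves) :
    mergeRevSum w n (K.fill V) = mergeRevSum w n (K.fill U)
      + (mergeRevSum w n V - mergeRevSum w n U) := by
  induction K with
  | hole => simp [Ctx.fill]
  | nodeL K r ih =>
    simp only [Ctx.fill, mergeRevSum]
    rw [ih, ← leaves_fill_congr K h]
    ring
  | nodeR l K ih =>
    simp only [Ctx.fill, mergeRevSum]
    rw [ih, ← leaves_fill_congr K h]
    ring

lemma leaves_swap1 (A B C : HCTree α) :
    (node (node A B) C).leaves = (node (node A C) B).leaves := by
  simp only [leaves]
  rw [Finset.union_assoc, Finset.union_assoc, Finset.union_comm B.leaves C.leaves]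

lemma leaves_swap2 (A B C : HCTree α) :
    (node (node A B) C).leaves = (node (node C B) A).leaves := by
  simp only [leaves]
  ext x; simp; tauto

lemma proper_swap1 {A B C : HCTree α} (h : (node (node A B) C).Proper) :
    (node (node A C) B).Proper := by
  obtain ⟨⟨pA, pB, dAB⟩, pC, dABC⟩ := h
  obtain ⟨dAC, dBC⟩ := Finset.disjoint_union_left.mp dABC
  exact ⟨⟨pA, pC, dAC⟩, pB, Finset.disjoint_union_left.mpr ⟨dAB, dBC.symm⟩⟩

lemma proper_swap2 {A B C : HCTree α} (h : (node (node A B) C).Proper) :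
    (node (node C B) A).Proper := by
  obtain ⟨⟨pA, pB, dAB⟩, pC, dABC⟩ := h
  obtain ⟨dAC, dBC⟩ := Finset.disjoint_union_left.mp dABC
  exact ⟨⟨pC, pB, dBC.symm⟩, pA, Finset.disjoint_union_left.mpr ⟨dAC.symm, dAB.symm⟩⟩

lemma mR_swap1 (w : α → α → ℝ) (hsym : ∀ i j, w i j = w j i) (n : ℕ)
    {A B C : HCTree α} (h : (node (node A B) C).Proper) :
    mergeRevSum w n (node (node A B) C) - mergeRevSum w n (node (node A C) B)
      = (C.leaves.card : ℝ) * wSet w A.leaves B.leaves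
        - (B.leaves.card : ℝ) * wSet w A.leaves C.leaves := by
  obtain ⟨⟨pA, pB, dAB⟩, pC, dABC⟩ := h
  obtain ⟨dAC, dBC⟩ := Finset.disjoint_union_left.mp dABC
  simp only [mergeRevSum, leaves]
  rw [wSet_union_left w _ dAB, wSet_union_left w _ dAC,
    Finset.card_union_of_disjoint dAB, Finset.card_union_of_disjoint dAC,
    wSet_comm w hsym C.leaves B.leaves]
  push_cast
  ring

lemma mR_swap2 (w : α → α → ℝ) (hsym : ∀ i j, w i j = w j i) (n : ℕ)
    {A B C : HCTree α} (h : (node (node A B) C).Proper) :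
    mergeRevSum w n (node (node A B) C) - mergeRevSum w n (node (node C B) A)
      = (C.leaves.card : ℝ) * wSet w A.leaves B.leaves
        - (A.leaves.card : ℝ) * wSet w B.leaves C.leaves := by
  obtain ⟨⟨pA, pB, dAB⟩, pC, dABC⟩ := h
  obtain ⟨dAC, dBC⟩ := Finset.disjoint_union_left.mp dABC
  simp only [mergeRevSum, leaves]
  rw [wSet_union_left w _ dAB, wSet_union_left w _ dBC.symm,
    Finset.card_union_of_disjoint dAB, Finset.card_union_of_disjoint dBC.symm,
    wSet_comm w hsym C.leaves B.leaves, wSet_comm w hsym C.leaves A.leaves,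
    wSet_comm w hsym B.leaves A.leaves]
  push_cast
  ring

/-- The revenue change caused by an interchange (first kind). -/
lemma rev_interchange1 [LinearOrder α] (w : α → α → ℝ) (hsym : ∀ i j, w i j = w j i)
    (K : Ctx α) (A B C : HCTree α)
    (hP : (K.fill (node (node A B) C)).Proper) :
    rev w (K.fill (node (node A B) C)) - rev w (K.fill (node (node A C) B))
      = (C.leaves.card : ℝ) * wSet w A.leaves B.leaves
        - (B.leaves.card : ℝ) * wSet w A.leaves C.leaves := by
  have hU : (node (node A B) C).Proper := proper_fill K hP
  have hl := leaves_swap1 A B C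
  have hP' : (K.fill (node (node A C) B)).Proper :=
    proper_fill_congr K hl (proper_swap1 hU) hP
  have hle : (K.fill (node (node A B) C)).leaves = (K.fill (node (node A C) B)).leaves :=
    leaves_fill_congr K hl
  rw [rev_eq_mergeRevSum w hsym _ hP, rev_eq_mergeRevSum w hsym _ hP', ← hle,
    mergeRevSum_fill w _ K hl, ← mR_swap1 w hsym (K.fill (node (node A B) C)).leaves.card hU]
  ring

/-- The revenue change caused by an interchange (second kind). -/
lemma rev_interchange2 [LinearOrder α] (w : α → α → ℝ) (hsym : ∀ i j, w i j = w j i)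
    (K : Ctx α) (A B C : HCTree α)
    (hP : (K.fill (node (node A B) C)).Proper) :
    rev w (K.fill (node (node A B) C)) - rev w (K.fill (node (node C B) A))
      = (C.leaves.card : ℝ) * wSet w A.leaves B.leaves
        - (A.leaves.card : ℝ) * wSet w B.leaves C.leaves := by
  have hU : (node (node A B) C).Proper := proper_fill K hP
  have hl := leaves_swap2 A B C
  have hP' : (K.fill (node (node C B) A)).Proper :=
    proper_fill_congr K hl (proper_swap2 hU) hP
  have hle : (K.fill (node (node A B) C)).leaves = (K.fill (node (node C B) A)).leaves :=
    leaves_fill_congr K hl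
  rw [rev_eq_mergeRevSum w hsym _ hP, rev_eq_mergeRevSum w hsym _ hP', ← hle,
    mergeRevSum_fill w _ K hl, ← mR_swap2 w hsym (K.fill (node (node A B) C)).leaves.card hU]
  ring

lemma teq_rev [LinearOrder α] (w : α → α → ℝ) (hsym : ∀ i j, w i j = w j i)
    {T S : HCTree α} (h : TEq T S) (hT : T.Proper) : rev w T = rev w S := by
  rw [rev_eq_mergeRevSum w hsym T hT, rev_eq_mergeRevSum w hsym S (teq_proper h hT),
    teq_leaves h, teq_mergeRevSum w hsym _ h]

end Aux

end HCTree
open HCTree in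
/-- `T` is locally optimal iff for every edge `(x,y)` (`x` internal
with parent `y`, in any presentation `S` of `T` as an unordered tree), with `A`, `B`
the leaf sets of the children of `x` and `C` the leaf set of the other child of `y`,
both `|C|·w(A,B) ≥ |A|·w(B,C)` and `|C|·w(A,B) ≥ |B|·w(A,C)` hold. -/
theorem locally_optimal_iff {n : ℕ} (w : Fin n → Fin n → ℝ)
    (hsym : ∀ i j, w i j = w j i) (hnonneg : ∀ i j, 0 ≤ w i j)
    (T : HCTree (Fin n)) (hproper : T.Proper) (horder : T.leaves = Finset.univ) :
    T.LocalOpt w ↔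
      ∀ (S : HCTree (Fin n)) (K : Ctx (Fin n)) (A B C : HCTree (Fin n)),
        TEq T S → S = K.fill (HCTree.node (HCTree.node A B) C) →
        ((C.leaves.card : ℝ) * wSet w A.leaves B.leaves ≥
            (A.leaves.card : ℝ) * wSet w B.leaves C.leaves ∧
         (C.leaves.card : ℝ) * wSet w A.leaves B.leaves ≥
            (B.leaves.card : ℝ) * wSet w A.leaves C.leaves) := by
  constructor
  · intro hopt S K A B C hTS hS
    have hPS : S.Proper := teq_proper hTS hproper
    have hrevTS : rev w T = rev w S := teq_rev w hsym hTS hproper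
    have hPS' : (K.fill (HCTree.node (HCTree.node A B) C)).Proper := hS ▸ hPS
    constructor
    · have h1 : rev w (K.fill (HCTree.node (HCTree.node C B) A)) ≤ rev w T :=
        hopt S _ hTS ⟨K, A, B, C, hS, Or.inr rfl⟩
      have h2 := rev_interchange2 w hsym K A B C hPS'
      rw [← hS] at h2
      linarith
    · have h1 : rev w (K.fill (HCTree.node (HCTree.node A C) B)) ≤ rev w T :=
        hopt S _ hTS ⟨K, A, B, C, hS, Or.inl rfl⟩
      have h2 := rev_interchange1 w hsym K A B C hPS'
      rw [← hS] at h2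
      linarith
  · intro hineq S S' hTS hint
    obtain ⟨K, A, B, C, hS, hS'⟩ := hint
    have hPS : S.Proper := teq_proper hTS hproper
    have hrevTS : rev w T = rev w S := teq_rev w hsym hTS hproper
    have hPS' : (K.fill (HCTree.node (HCTree.node A B) C)).Proper := hS ▸ hPS
    obtain ⟨hi1, hi2⟩ := hineq S K A B C hTS hS
    rcases hS' with h | h
    · have h2 := rev_interchange1 w hsym K A B C hPS'
      rw [← hS] at h2
      rw [h]
      linarith
    · have h2 := rev_interchange2 w hsym K A B C hPS'
      rw [← hS] at h2
      rw [h]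
      linarith
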